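/- arXiv:2203.00093 — 3 statements merged into one kernel-verified Lean document; each statement's English description precedes it below -/
import Mathlib

section
/- If (1-p_l)C'(p_l) + C(p_l) + r ≥ 0, then J(p) = λ(rp + C(p))/(1-p) is non-decreasing on [p_l, p_u], hence attains its minimum over [p_l, p_u] at p_l. -/
/-!
The derivative of `J` is `λ ((1 - q) C'(q) + C(q) + r) / (1 - q)²`, so it suffices that the
numerator is nonnegative on `[p_l, p_u]`. By convexity, `C(q) - C(p_l) ≥ (q - p_l) C'(p_l)` and
`C'` is nondecreasing, hence `(1 - q) C'(q) + C(q)` is nondecreasing for `q ≤ 1`, and the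
hypothesis says the numerator is nonnegative at `p_l`.
-/

open Set

theorem ConvexOn.monotoneOn_sub_mul_deriv_add {f f' : ℝ → ℝ} {a b c : ℝ}
    (hf : ConvexOn ℝ (Icc a b) f) (hf' : ∀ x ∈ Icc a b, HasDerivAt f (f' x) x) (hbc : b ≤ c) :
    MonotoneOn (fun x => (c - x) * f' x + f x) (Icc a b) := by
  intro x hx y hy hxy
  rcases hxy.eq_or_lt with rfl | hlt
  · exact le_rfl
  have hslope_lo : f' x ≤ slope f x y := hf.le_slope_of_hasDerivAt hx hy hlt (hf' x hx)
  have hslope_hi : slope f x y ≤ f' y := hf.slope_le_of_hasDerivAt hx hy hlt (hf' y hy)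
  have hdiff : f y - f x = slope f x y * (y - x) := by
    rw [slope_def_field, div_mul_cancel₀ _ (sub_ne_zero.mpr hlt.ne')]
  have hcy : 0 ≤ c - y := by linarith [hy.2]
  -- `f y - f x ≥ (y - x) f' x`, so the increment is at least `(c - y) (f' y - f' x) ≥ 0`.
  nlinarith [mul_le_mul_of_nonneg_left (hslope_lo.trans hslope_hi) hcy,
    mul_le_mul_of_nonneg_right hslope_lo (sub_pos.mpr hlt).le]

theorem monotoneOn_div_sub_of_sub_mul_deriv_add_nonneg {f f' : ℝ → ℝ} {s : Set ℝ} {c : ℝ}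
    (hs : Convex ℝ s) (hsc : ∀ x ∈ s, x < c) (hf' : ∀ x ∈ s, HasDerivAt f (f' x) x)
    (hnonneg : ∀ x ∈ s, 0 ≤ (c - x) * f' x + f x) :
    MonotoneOn (fun x => f x / (c - x)) s := by
  have hne : ∀ x ∈ s, c - x ≠ 0 := fun x hx => (sub_pos.mpr (hsc x hx)).ne'
  have hderiv : ∀ x ∈ s,
      HasDerivAt (fun x => f x / (c - x)) (((c - x) * f' x + f x) / (c - x) ^ 2) x := by
    intro x hx
    have hden : HasDerivAt (fun y => c - y) (-1) x := by
      simpa using (hasDerivAt_id x).const_sub c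
    exact ((hf' x hx).fun_div hden (hne x hx)).congr_deriv (by ring)
  have hcont : ContinuousOn (fun x => f x / (c - x)) s := fun x hx =>
    (hderiv x hx).continuousAt.continuousWithinAt
  refine monotoneOn_of_hasDerivWithinAt_nonneg hs hcont
    (fun x hx => (hderiv x (interior_subset hx)).hasDerivWithinAt) fun x hx => ?_
  exact div_nonneg (hnonneg x (interior_subset hx)) (sq_nonneg _)

theorem stmt_2_general (lam r pl pu : ℝ) (hlam : 0 < lam)
    (hpu : pu < 1)
    (C C' : ℝ → ℝ)
    (hconv : ConvexOn ℝ (Set.Icc pl pu) C)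
    (hderiv : ∀ q ∈ Set.Icc pl pu, HasDerivAt C (C' q) q)
    (hcond : 0 ≤ (1 - pl) * C' pl + C pl + r) :
    MonotoneOn (fun q => lam * (r * q + C q) / (1 - q)) (Set.Icc pl pu) ∧
    ∀ q ∈ Set.Icc pl pu,
      lam * (r * pl + C pl) / (1 - pl) ≤ lam * (r * q + C q) / (1 - q) := by
  have hmono : MonotoneOn (fun q => lam * (r * q + C q) / (1 - q)) (Icc pl pu) := by
    refine monotoneOn_div_sub_of_sub_mul_deriv_add_nonneg (f' := fun q => lam * (r + C' q))
      (convex_Icc pl pu) (fun q hq => hq.2.trans_lt hpu) (fun q hq => ?_) fun q hq => ?_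
    · simpa using (((hasDerivAt_id q).const_mul r).add (hderiv q hq)).const_mul lam
    · have hpl : pl ∈ Icc pl pu := ⟨le_rfl, hq.1.trans hq.2⟩
      have hg := hconv.monotoneOn_sub_mul_deriv_add hderiv hpu.le hpl hq hq.1
      have hnum : 0 ≤ lam * ((1 - q) * C' q + C q + r) := mul_nonneg hlam.le (by linarith)
      linarith
  exact ⟨hmono, fun q hq => hmono ⟨le_rfl, hq.1.trans hq.2⟩ hq hq.1⟩

/-- If (1-p_l)C'(p_l) + C(p_l) + r ≥ 0, then J(p) = λ(rp + C(p))/(1-p) is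
non-decreasing on [p_l, p_u], hence attains its minimum over [p_l, p_u] at p_l. -/
theorem stmt_2 (lam r pl pu : ℝ) (hlam : 0 < lam) (hr : 0 < r)
    (hpl : 0 < pl) (hplu : pl < pu) (hpu : pu < 1)
    (C C' : ℝ → ℝ)
    (hconv : ConvexOn ℝ (Set.Icc pl pu) C)
    (hderiv : ∀ q ∈ Set.Icc pl pu, HasDerivAt C (C' q) q)
    (hcont : ContinuousOn C' (Set.Icc pl pu))
    (hcond : 0 ≤ (1 - pl) * C' pl + C pl + r) :
    MonotoneOn (fun q => lam * (r * q + C q) / (1 - q)) (Set.Icc pl pu) ∧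
    ∀ q ∈ Set.Icc pl pu,
      lam * (r * pl + C pl) / (1 - pl) ≤ lam * (r * q + C q) / (1 - q) :=
  stmt_2_general lam r pl pu hlam hpu C C' hconv hderiv hcond
end

section
/- If (1-p_u)C'(p_u) + C(p_u) + r ≤ 0, then J(p) = λ(rp + C(p))/(1-p) is non-increasing on [p_l, p_u], hence attains its minimum over [p_l, p_u] at p_u. -/
/-!
Writing `J(q) = λ g(q) / (1 - q)` with `g(q) = r q + C(q)`, the quotient rule gives
`J'(q) = λ ((1 - q) C'(q) + C(q) + r) / (1 - q)²`. Up to the factor `λ`, the numerator is `r` plus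
the value at `1` of the tangent line to `C` at `q`; for a convex `C` this value only grows as the point of
tangency moves right towards `1`, so it is largest at `q = p_u`, where it is `≤ 0` by assumption.
-/

open Set

theorem ConvexOn.add_deriv_mul_sub_le_add_deriv_mul_sub {S : Set ℝ} {f : ℝ → ℝ}
    (hf : ConvexOn ℝ S f) {x y a d e : ℝ} (hx : x ∈ S) (hy : y ∈ S) (hxy : x < y) (hya : y ≤ a)
    (hfx : HasDerivAt f d x) (hfy : HasDerivAt f e y) :
    f x + d * (a - x) ≤ f y + e * (a - y) := by
  have hd : d ≤ slope f x y := hf.le_slope_of_hasDerivAt hx hy hxy hfx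
  have he : slope f x y ≤ e := hf.slope_le_of_hasDerivAt hx hy hxy hfy
  have hfy_eq : f y = f x + slope f x y * (y - x) := by
    rw [slope_def_field]
    field_simp [sub_ne_zero.mpr hxy.ne']
    ring
  calc f x + d * (a - x) ≤ f x + slope f x y * (a - x) := by gcongr; linarith
    _ = f y + slope f x y * (a - y) := by rw [hfy_eq]; ring
    _ ≤ f y + e * (a - y) := by gcongr

theorem HasDerivAt.div_one_sub {g : ℝ → ℝ} {g' q : ℝ} (hg : HasDerivAt g g' q) (hq : q ≠ 1) :
    HasDerivAt (fun x => g x / (1 - x)) (((1 - q) * g' + g q) / (1 - q) ^ 2) q := by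
  have hden : HasDerivAt (fun x : ℝ => 1 - x) (-1) q := by
    simpa using (hasDerivAt_id q).const_sub 1
  exact (hg.div hden (sub_ne_zero.mpr hq.symm)).congr_deriv (by ring)

theorem antitoneOn_div_one_sub_Icc {g g' : ℝ → ℝ} {a b : ℝ} (hb : b < 1)
    (hg : ∀ q ∈ Icc a b, HasDerivAt g (g' q) q)
    (hsign : ∀ q ∈ Ioo a b, (1 - q) * g' q + g q ≤ 0) :
    AntitoneOn (fun x => g x / (1 - x)) (Icc a b) := by
  have hJ : ∀ q ∈ Icc a b,
      HasDerivAt (fun x => g x / (1 - x)) (((1 - q) * g' q + g q) / (1 - q) ^ 2) q :=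
    fun q hq => (hg q hq).div_one_sub (hq.2.trans_lt hb).ne
  refine antitoneOn_of_hasDerivWithinAt_nonpos (f' := fun q => ((1 - q) * g' q + g q) / (1 - q) ^ 2)
    (convex_Icc a b)
    (fun q hq => (hJ q hq).continuousAt.continuousWithinAt) (fun q hq => ?_) (fun q hq => ?_)
  · exact (hJ q (interior_subset hq)).hasDerivWithinAt
  · rw [interior_Icc] at hq
    exact div_nonpos_of_nonpos_of_nonneg (hsign q hq) (sq_nonneg _)

theorem stmt_3_general (lam r pl pu : ℝ) (hlam : 0 < lam)
    (hpu : pu < 1)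
    (C C' : ℝ → ℝ)
    (hconv : ConvexOn ℝ (Set.Icc pl pu) C)
    (hderiv : ∀ q ∈ Set.Icc pl pu, HasDerivAt C (C' q) q)
    (hcond : (1 - pu) * C' pu + C pu + r ≤ 0) :
    AntitoneOn (fun q => lam * (r * q + C q) / (1 - q)) (Set.Icc pl pu) ∧
    ∀ q ∈ Set.Icc pl pu,
      lam * (r * pu + C pu) / (1 - pu) ≤ lam * (r * q + C q) / (1 - q) := by
  have hnum : ∀ q ∈ Icc pl pu,
      HasDerivAt (fun x => lam * (r * x + C x)) (lam * (r + C' q)) q := fun q hq => by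
    simpa using (((hasDerivAt_id q).const_mul r).add (hderiv q hq)).const_mul lam
  have hanti : AntitoneOn (fun q => lam * (r * q + C q) / (1 - q)) (Icc pl pu) := by
    refine antitoneOn_div_one_sub_Icc hpu hnum fun q hq => ?_
    have hpuI : pu ∈ Icc pl pu := ⟨hq.1.le.trans hq.2.le, le_rfl⟩
    have htangent := hconv.add_deriv_mul_sub_le_add_deriv_mul_sub (Ioo_subset_Icc_self hq) hpuI
      hq.2 hpu.le (hderiv q (Ioo_subset_Icc_self hq)) (hderiv pu hpuI)
    calc (1 - q) * (lam * (r + C' q)) + lam * (r * q + C q)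
        = lam * (C q + C' q * (1 - q) + r) := by ring
      _ ≤ 0 := mul_nonpos_of_nonneg_of_nonpos hlam.le (by linarith)
  exact ⟨hanti, fun q hq => hanti hq ⟨hq.1.trans hq.2, le_rfl⟩ hq.2⟩

/-- If (1-p_u)C'(p_u) + C(p_u) + r ≤ 0, then J(p) = λ(rp + C(p))/(1-p) is
non-increasing on [p_l, p_u], hence attains its minimum over [p_l, p_u] at p_u. -/
theorem stmt_3 (lam r pl pu : ℝ) (hlam : 0 < lam) (hr : 0 < r)
    (hpl : 0 < pl) (hplu : pl < pu) (hpu : pu < 1)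
    (C C' : ℝ → ℝ)
    (hconv : ConvexOn ℝ (Set.Icc pl pu) C)
    (hderiv : ∀ q ∈ Set.Icc pl pu, HasDerivAt C (C' q) q)
    (hcont : ContinuousOn C' (Set.Icc pl pu))
    (hcond : (1 - pu) * C' pu + C pu + r ≤ 0) :
    AntitoneOn (fun q => lam * (r * q + C q) / (1 - q)) (Set.Icc pl pu) ∧
    ∀ q ∈ Set.Icc pl pu,
      lam * (r * pu + C pu) / (1 - pu) ≤ lam * (r * q + C q) / (1 - q) :=
  stmt_3_general lam r pl pu hlam hpu C C' hconv hderiv hcond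
end

section
/- Lower bound on the minimized Hamiltonian term: let Γ₂(s) = (h/ν)(e^{-νs}+νs-1) + (r+C∞)/(1-p∞) and Φ(s) = min_{p∈[p_l,p_u]} (C(p) + Γ₂(s)p), where C is convex, nonnegative, and p∞ minimizes C(p) + Γ₂(0)p with minimum value (rp∞+C∞)/(1-p∞) and C∞ = C(p∞). Then for all s ≥ 0 and any minimizer P*(s) of Φ at s: Φ(s) ≥ (rp∞+C∞)/(1-p∞) + h·P*(s)·(s - (1-e^{-νs})/ν). -/
/-- Lower bound on the minimized Hamiltonian term: with
Γ₂(s) = (h/ν)(e^{-νs}+νs-1) + (r+C∞)/(1-p∞), C convex nonnegative, p∞ a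
minimizer of C(p) + Γ₂(0)p over [p_l,p_u] with minimum value
(rp∞+C∞)/(1-p∞) and C∞ = C(p∞), any minimizer P*(s) of
p ↦ C(p) + Γ₂(s)p satisfies
C(P*(s)) + Γ₂(s)P*(s) ≥ (rp∞+C∞)/(1-p∞) + h·P*(s)·(s - (1-e^{-νs})/ν). -/
theorem stmt_19 (h nu r pl pu pinf Cinf : ℝ)
    (hh : 0 < h) (hnu : 0 < nu) (hr : 0 < r)
    (hpl : 0 < pl) (hplpinf : pl ≤ pinf) (hpinfpu : pinf ≤ pu) (hpu : pu < 1)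
    (C : ℝ → ℝ) (Gamma2 Pstar : ℝ → ℝ)
    (hconv : ConvexOn ℝ (Set.Icc pl pu) C)
    (hCpos : ∀ q ∈ Set.Icc pl pu, 0 ≤ C q)
    (hCinf : C pinf = Cinf)
    (hG : ∀ s, Gamma2 s = (h / nu) * (Real.exp (-nu * s) + nu * s - 1)
      + (r + Cinf) / (1 - pinf))
    (hmin0 : ∀ q ∈ Set.Icc pl pu,
      C pinf + Gamma2 0 * pinf ≤ C q + Gamma2 0 * q)
    (hval0 : C pinf + Gamma2 0 * pinf = (r * pinf + Cinf) / (1 - pinf))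
    (hPmem : ∀ s, 0 ≤ s → Pstar s ∈ Set.Icc pl pu)
    (hPmin : ∀ s, 0 ≤ s → ∀ q ∈ Set.Icc pl pu,
      C (Pstar s) + Gamma2 s * Pstar s ≤ C q + Gamma2 s * q) :
    ∀ s, 0 ≤ s →
      (r * pinf + Cinf) / (1 - pinf)
        + h * Pstar s * (s - (1 - Real.exp (-nu * s)) / nu)
      ≤ C (Pstar s) + Gamma2 s * Pstar s := by
  intro s hs
  have hP := hPmem s hs
  have h1 := hmin0 _ hP
  have hG0 : Gamma2 0 = (r + Cinf) / (1 - pinf) := by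
    rw [hG]; simp
  have key : Gamma2 s * Pstar s
      = Gamma2 0 * Pstar s + h * Pstar s * (s - (1 - Real.exp (-nu * s)) / nu) := by
    rw [hG, hG0]
    field_simp
    ring
  rw [← hval0]
  linarith [h1, key.ge, key.le]
end
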